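/- Let A = ⟨a₁, a₂⟩ be 2-dimensional and B = B₁ ⊕ B₂, C = C₁ ⊕ C₂ with B₁ = ⟨b₁,b₂⟩, B₂ = ⟨b₃,b₄⟩, C₁ = ⟨c₁,c₂⟩, C₂ = ⟨c₃,c₄⟩. Let φ₁ = a₁ ⊗ (b₁⊗c₁ + b₂⊗c₂) and φ₂ = a₂ ⊗ (b₃⊗c₃ + b₄⊗c₄). Define T(φ₁) = ⟨a₁⟩⊗B⊗C₁ + ⟨a₁⟩⊗B₁⊗C + A⊗⟨b₁⊗c₁ + b₂⊗c₂⟩ and T(φ₂) = ⟨a₂⟩⊗B⊗C₂ + ⟨a₂⟩⊗B₂⊗C + A⊗⟨b₃⊗c₃ + b₄⊗c₄⟩, as subspaces of A⊗B⊗C. Then the annihilator of T(φ₁) + T(φ₂) in (A⊗B⊗C)* is the 6-dimensional space spanned by a₂*⊗b₁*⊗c₂*, a₂*⊗b₂*⊗c₁*, a₂*⊗(b₁*⊗c₁* − b₂*⊗c₂*), a₁*⊗b₄*⊗c₃*, a₁*⊗b₃*⊗c₄*, a₁*⊗(b₄*⊗c₄* − b₃*⊗c₃*). -/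

import Mathlib

open TensorProduct

noncomputable section

abbrev A2 : Type := Fin 2 → ℂ
abbrev V4 : Type := Fin 4 → ℂ
abbrev T3 : Type := A2 ⊗[ℂ] (V4 ⊗[ℂ] V4)

def aa (i : Fin 2) : A2 := Pi.basisFun ℂ (Fin 2) i
def ee (i : Fin 4) : V4 := Pi.basisFun ℂ (Fin 4) i

/-- coordinate functionals: the dual bases -/
def aa' (i : Fin 2) : Module.Dual ℂ A2 := LinearMap.proj i
def ee' (i : Fin 4) : Module.Dual ℂ V4 := LinearMap.proj i

/-- The subspace `X ⊗ Y ⊗ Z` of `A ⊗ B ⊗ C`. -/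
def tp3 (X : Submodule ℂ A2) (Y Z : Submodule ℂ V4) : Submodule ℂ T3 :=
  Submodule.span ℂ {w | ∃ x ∈ X, ∃ y ∈ Y, ∃ z ∈ Z, w = x ⊗ₜ[ℂ] (y ⊗ₜ[ℂ] z)}

/-- `A ⊗ ⟨θ⟩` for `θ ∈ B ⊗ C`. -/
def modA (θ : V4 ⊗[ℂ] V4) : Submodule ℂ T3 :=
  LinearMap.range ((TensorProduct.mk ℂ A2 (V4 ⊗[ℂ] V4)).flip θ)

/-- the functional `f ⊗ g ⊗ h ∈ (A⊗B⊗C)*`. -/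
def dfun (f : Module.Dual ℂ A2) (g h : Module.Dual ℂ V4) : Module.Dual ℂ T3 :=
  TensorProduct.dualDistrib ℂ A2 (V4 ⊗[ℂ] V4)
    (f ⊗ₜ[ℂ] (TensorProduct.dualDistrib ℂ V4 V4 (g ⊗ₜ[ℂ] h)))

/-- tangent space `T(φ₁) = ⟨a₁⟩⊗B⊗C₁ + ⟨a₁⟩⊗B₁⊗C + A⊗⟨b₁⊗c₁ + b₂⊗c₂⟩` -/
def Tφ₁ : Submodule ℂ T3 :=
  tp3 (Submodule.span ℂ {aa 0}) ⊤ (Submodule.span ℂ {ee 0, ee 1}) ⊔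
    tp3 (Submodule.span ℂ {aa 0}) (Submodule.span ℂ {ee 0, ee 1}) ⊤ ⊔
    modA (ee 0 ⊗ₜ[ℂ] ee 0 + ee 1 ⊗ₜ[ℂ] ee 1)

/-- tangent space `T(φ₂) = ⟨a₂⟩⊗B⊗C₂ + ⟨a₂⟩⊗B₂⊗C + A⊗⟨b₃⊗c₃ + b₄⊗c₄⟩` -/
def Tφ₂ : Submodule ℂ T3 :=
  tp3 (Submodule.span ℂ {aa 1}) ⊤ (Submodule.span ℂ {ee 2, ee 3}) ⊔
    tp3 (Submodule.span ℂ {aa 1}) (Submodule.span ℂ {ee 2, ee 3}) ⊤ ⊔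
    modA (ee 2 ⊗ₜ[ℂ] ee 2 + ee 3 ⊗ₜ[ℂ] ee 3)

/-! Each summand of `T(φ₁) + T(φ₂)` is spanned by tensors `aᵢ ⊗ b_j ⊗ c_k` and `aᵢ ⊗ θ`, so a functional
annihilates it iff its coefficients vanish on the corresponding index triples and `f (aᵢ ⊗ θ) = 0`
for `θ = b₁⊗c₁ + b₂⊗c₂` and `θ = b₃⊗c₃ + b₄⊗c₄`. The coefficients left free are exactly those of
the six listed functionals. -/

@[simp] lemma aa'_aa (i j : Fin 2) : aa' i (aa j) = if i = j then 1 else 0 := by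
  simp [aa, aa', Pi.single_apply]

@[simp] lemma ee'_ee (i j : Fin 4) : ee' i (ee j) = if i = j then 1 else 0 := by
  simp [ee, ee', Pi.single_apply]

@[simp] lemma dfun_tmul (f : Module.Dual ℂ A2) (g h : Module.Dual ℂ V4) (x : A2) (y z : V4) :
    dfun f g h (x ⊗ₜ[ℂ] (y ⊗ₜ[ℂ] z)) = f x * (g y * h z) := by
  simp [dfun, TensorProduct.dualDistrib_apply]

lemma span_range_ee : Submodule.span ℂ (Set.range ee) = ⊤ :=
  (Pi.basisFun ℂ (Fin 4)).span_eq

lemma tp3_eq_map₂ (X : Submodule ℂ A2) (Y Z : Submodule ℂ V4) :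
    tp3 X Y Z = Submodule.map₂ (mk ℂ A2 (V4 ⊗[ℂ] V4)) X (Submodule.map₂ (mk ℂ V4 V4) Y Z) := by
  refine le_antisymm (Submodule.span_le.2 ?_) (Submodule.map₂_le.2 fun x hx w hw => ?_)
  · rintro _ ⟨x, hx, y, hy, z, hz, rfl⟩
    exact Submodule.apply_mem_map₂ _ hx (Submodule.apply_mem_map₂ _ hy hz)
  · suffices Submodule.map₂ (mk ℂ V4 V4) Y Z ≤ (tp3 X Y Z).comap (mk ℂ A2 _ x) from this hw
    exact Submodule.map₂_le.2 fun y hy z hz => Submodule.subset_span ⟨x, hx, y, hy, z, hz, rfl⟩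

lemma tp3_span_le_ker_iff (S : Set A2) (T U : Set V4) (f : Module.Dual ℂ T3) :
    tp3 (Submodule.span ℂ S) (Submodule.span ℂ T) (Submodule.span ℂ U) ≤ LinearMap.ker f ↔
      ∀ x ∈ S, ∀ y ∈ T, ∀ z ∈ U, f (x ⊗ₜ[ℂ] (y ⊗ₜ[ℂ] z)) = 0 := by
  rw [tp3_eq_map₂, Submodule.map₂_span_span, Submodule.map₂_span_span, Submodule.span_le,
    Set.image2_subset_iff]
  simp only [Set.forall_mem_image2, mk_apply, SetLike.mem_coe, LinearMap.mem_ker]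

lemma modA_le_ker_iff (θ : V4 ⊗[ℂ] V4) (f : Module.Dual ℂ T3) :
    modA θ ≤ LinearMap.ker f ↔ ∀ i, f (aa i ⊗ₜ[ℂ] θ) = 0 := by
  rw [modA, LinearMap.range_eq_map, ← (Pi.basisFun ℂ (Fin 2)).span_eq, Submodule.map_span,
    Submodule.span_le]
  simp [Set.range_subset_iff, aa]

lemma dual_T3_ext {f g : Module.Dual ℂ T3}
    (h : ∀ i j k, f (aa i ⊗ₜ[ℂ] (ee j ⊗ₜ[ℂ] ee k)) = g (aa i ⊗ₜ[ℂ] (ee j ⊗ₜ[ℂ] ee k))) : f = g := by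
  ext i j k
  simpa [aa, ee] using h i j k

lemma mem_dualAnnihilator_Tφ_iff (f : Module.Dual ℂ T3) :
    f ∈ (Tφ₁ ⊔ Tφ₂).dualAnnihilator ↔
      (∀ j, ∀ k ∈ ({0, 1} : Set (Fin 4)), f (aa 0 ⊗ₜ[ℂ] (ee j ⊗ₜ[ℂ] ee k)) = 0) ∧
      (∀ j ∈ ({0, 1} : Set (Fin 4)), ∀ k, f (aa 0 ⊗ₜ[ℂ] (ee j ⊗ₜ[ℂ] ee k)) = 0) ∧
      (∀ i, f (aa i ⊗ₜ[ℂ] (ee 0 ⊗ₜ[ℂ] ee 0 + ee 1 ⊗ₜ[ℂ] ee 1)) = 0) ∧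
      (∀ j, ∀ k ∈ ({2, 3} : Set (Fin 4)), f (aa 1 ⊗ₜ[ℂ] (ee j ⊗ₜ[ℂ] ee k)) = 0) ∧
      (∀ j ∈ ({2, 3} : Set (Fin 4)), ∀ k, f (aa 1 ⊗ₜ[ℂ] (ee j ⊗ₜ[ℂ] ee k)) = 0) ∧
      (∀ i, f (aa i ⊗ₜ[ℂ] (ee 2 ⊗ₜ[ℂ] ee 2 + ee 3 ⊗ₜ[ℂ] ee 3)) = 0) := by
  rw [Submodule.mem_dualAnnihilator]
  change Tφ₁ ⊔ Tφ₂ ≤ LinearMap.ker f ↔ _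
  simp only [Tφ₁, Tφ₂, sup_le_iff, ← span_range_ee, tp3_span_le_ker_iff, modA_le_ker_iff,
    Set.forall_mem_insert, Set.mem_singleton_iff, forall_eq, Set.forall_mem_range, and_assoc]

lemma eq_combination_of_mem_dualAnnihilator {f : Module.Dual ℂ T3}
    (hf : f ∈ (Tφ₁ ⊔ Tφ₂).dualAnnihilator) :
    f = f (aa 1 ⊗ₜ[ℂ] (ee 0 ⊗ₜ[ℂ] ee 1)) • dfun (aa' 1) (ee' 0) (ee' 1) +
        f (aa 1 ⊗ₜ[ℂ] (ee 1 ⊗ₜ[ℂ] ee 0)) • dfun (aa' 1) (ee' 1) (ee' 0) +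
        f (aa 1 ⊗ₜ[ℂ] (ee 0 ⊗ₜ[ℂ] ee 0)) •
          (dfun (aa' 1) (ee' 0) (ee' 0) - dfun (aa' 1) (ee' 1) (ee' 1)) +
        f (aa 0 ⊗ₜ[ℂ] (ee 3 ⊗ₜ[ℂ] ee 2)) • dfun (aa' 0) (ee' 3) (ee' 2) +
        f (aa 0 ⊗ₜ[ℂ] (ee 2 ⊗ₜ[ℂ] ee 3)) • dfun (aa' 0) (ee' 2) (ee' 3) +
        f (aa 0 ⊗ₜ[ℂ] (ee 3 ⊗ₜ[ℂ] ee 3)) •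
          (dfun (aa' 0) (ee' 3) (ee' 3) - dfun (aa' 0) (ee' 2) (ee' 2)) := by
  obtain ⟨hC₁, hB₁, hθ₁, hC₂, hB₂, hθ₂⟩ := (mem_dualAnnihilator_Tφ_iff f).1 hf
  have h₁₁ : f (aa 1 ⊗ₜ[ℂ] (ee 1 ⊗ₜ[ℂ] ee 1)) = -f (aa 1 ⊗ₜ[ℂ] (ee 0 ⊗ₜ[ℂ] ee 0)) := by
    simpa [tmul_add, add_eq_zero_iff_eq_neg'] using hθ₁ 1
  have h₂₂ : f (aa 0 ⊗ₜ[ℂ] (ee 2 ⊗ₜ[ℂ] ee 2)) = -f (aa 0 ⊗ₜ[ℂ] (ee 3 ⊗ₜ[ℂ] ee 3)) := by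
    simpa [tmul_add, add_eq_zero_iff_eq_neg] using hθ₂ 0
  refine dual_T3_ext fun i j k => ?_
  fin_cases i <;> fin_cases j <;> fin_cases k <;> simp [hC₁, hB₁, hC₂, hB₂, h₁₁, h₂₂]

/-- The annihilator of `T(φ₁) + T(φ₂)` in `(A⊗B⊗C)*` is the 6-dimensional space
spanned by `a₂*⊗b₁*⊗c₂*`, `a₂*⊗b₂*⊗c₁*`, `a₂*⊗(b₁*⊗c₁* − b₂*⊗c₂*)`,
`a₁*⊗b₄*⊗c₃*`, `a₁*⊗b₃*⊗c₄*`, `a₁*⊗(b₄*⊗c₄* − b₃*⊗c₃*)`. -/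
theorem annihilator_eq :
    (Tφ₁ ⊔ Tφ₂).dualAnnihilator =
      Submodule.span ℂ
        {dfun (aa' 1) (ee' 0) (ee' 1), dfun (aa' 1) (ee' 1) (ee' 0),
         dfun (aa' 1) (ee' 0) (ee' 0) - dfun (aa' 1) (ee' 1) (ee' 1),
         dfun (aa' 0) (ee' 3) (ee' 2), dfun (aa' 0) (ee' 2) (ee' 3),
         dfun (aa' 0) (ee' 3) (ee' 3) - dfun (aa' 0) (ee' 2) (ee' 2)} := by
  apply le_antisymm
  · intro f hf
    rw [eq_combination_of_mem_dualAnnihilator hf]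
    refine add_mem (add_mem (add_mem (add_mem (add_mem ?_ ?_) ?_) ?_) ?_) ?_ <;>
      exact Submodule.smul_mem _ _ (Submodule.subset_span (by simp))
  · rw [Submodule.span_le]
    rintro v (rfl | rfl | rfl | rfl | rfl | rfl) <;>
      exact (mem_dualAnnihilator_Tφ_iff _).2 (by simp [tmul_add])
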